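/- arXiv:math/0610329 — 3 statements merged into one kernel-verified Lean document; each statement's English description precedes it below -/
import Mathlib

section
/- (Abel-summation bound for the fast component). Let b ∈ (1/2, 1), β₀ > 0, β_n = β₀ n^{-b} and u_n = Σ_{k=1}^n β_k. If (θ_n) is an ℝ^d-valued random sequence with ‖θ_n‖ = O(√(β_n log u_n)) almost surely, then almost surely (1/√n) ‖Σ_{k=1}^n β_k^{-1}(θ_{k+1} - θ_k)‖ = O(n^{(b-1)/2} log n); in particular (1/√n) Σ_{k=1}^n β_k^{-1}(θ_{k+1} - θ_k) → 0 almost surely. -/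
open MeasureTheory Filter Asymptotics Matrix

/-- Action of a real `p × q` matrix on a Euclidean vector. -/
noncomputable def mv {p q : ℕ} (A : Matrix (Fin p) (Fin q) ℝ)
    (x : EuclideanSpace ℝ (Fin q)) : EuclideanSpace ℝ (Fin p) :=
  WithLp.toLp 2 (fun i => ∑ j, A i j * x j)

/-- The matrix exponential of a real square matrix. -/
noncomputable def expm {p : ℕ} (A : Matrix (Fin p) (Fin p) ℝ) : Matrix (Fin p) (Fin p) ℝ :=
  NormedSpace.exp A

/-- `Lam A = -max { Re lam | lam ∈ Sp(A) }`, the negative spectral abscissa of a real matrix,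
where the spectrum is taken over `ℂ`. -/
noncomputable def Lam {p : ℕ} (A : Matrix (Fin p) (Fin p) ℝ) : ℝ :=
  - sSup (Complex.re '' spectrum ℂ (A.map (Complex.ofReal ·)))

open Classical in
/-- The indicator `𝟙_{b = 1}`. -/
noncomputable def ind1 (b : ℝ) : ℝ := if b = 1 then 1 else 0

/-- A function is slowly varying at infinity if `L (c x) / L x → 1` for every `c > 0`. -/
def SlowlyVarying (L : ℝ → ℝ) : Prop :=
  ∀ c : ℝ, 0 < c → Tendsto (fun x => L (c * x) / L x) atTop (nhds 1)

open Classical in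
/-- Condition (C) for a sequence `(w n)`, relative to the exponent `b` and the step sizes `β`:
`w` is positive and bounded and, if `b = 1`, `w n = n ^ (-ω) * L n` for some `ω ≥ 0` and some
nondecreasing slowly varying `L`, while if `b < 1`, `w n / w (n+1) = 1 + o (β n)`. -/
def ConditionC (b : ℝ) (β w : ℕ → ℝ) : Prop :=
  (∀ n, 0 < w n) ∧ BddAbove (Set.range w) ∧
    (if b = 1 then
      ∃ ω : ℝ, 0 ≤ ω ∧ ∃ L : ℝ → ℝ, Monotone L ∧ SlowlyVarying L ∧
        ∀ n : ℕ, 1 ≤ n → w n = (n : ℝ) ^ (-ω) * L n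
    else
      (fun n : ℕ => w n / w (n + 1) - 1) =o[atTop] β)

/-- Condition (C') for a sequence `(w n)`, relative to the step sizes `γ`:
`w` is positive and bounded and `w n / w (n+1) = 1 + o (γ n)`. -/
def ConditionC' (γ w : ℕ → ℝ) : Prop :=
  (∀ n, 0 < w n) ∧ BddAbove (Set.range w) ∧
    (fun n : ℕ => w n / w (n + 1) - 1) =o[atTop] γ

/-- The operator norm of a real matrix, induced by the Euclidean vector norms. -/
noncomputable def opn {p q : ℕ} (A : Matrix (Fin p) (Fin q) ℝ) : ℝ :=
  sSup ((fun x : EuclideanSpace ℝ (Fin q) => ‖mv A x‖) '' {x | ‖x‖ ≤ 1})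

/-!
Write `β k⁻¹ = β₀⁻¹ w k ^ 2` with `w k = k ^ (b / 2)`. Since `log u k = O(log k)`, the
hypothesis says `w k ‖θ k‖ = O(log k)`. Summation by parts turns the sum into boundary terms
plus `∑ (w (k+1) ^ 2 - w k ^ 2) θ (k+1)`, and `(x ^ 2 - y ^ 2) / x ≤ 2 (x - y)` for `y ≤ x`,
`0 < x` bounds that sum by `2 log n ∑ (w (k+1) - w k) ≤ 2 w n log n`. Hence the sum is
`O(n ^ (b/2) log n)`; dividing by `√n` gives `O(n ^ ((b-1)/2) log n)`, which tends to `0`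
because `b < 1`.
-/

open Finset
open scoped Topology

section SummationByParts

theorem sum_Icc_smul_sub_by_parts {R E : Type*} [Ring R] [AddCommGroup E] [Module R E]
    (a : ℕ → R) (v : ℕ → E) {n : ℕ} (hn : 1 ≤ n) :
    ∑ k ∈ Icc 1 n, a k • (v (k + 1) - v k) =
      a n • v (n + 1) - a 1 • v 1 - ∑ k ∈ Ico 1 n, (a (k + 1) - a k) • v (k + 1) := by
  induction n, hn using Nat.le_induction with
  | base => simp [smul_sub]
  | succ n hn ih =>
    rw [sum_Icc_succ_top (by omega), ih, sum_Ico_succ_top hn, smul_sub, sub_smul]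
    abel

theorem sq_sub_sq_mul_le {x y c M : ℝ} (hy : y ≤ x) (hc : 0 ≤ c) (hM : x * c ≤ M) :
    (x ^ 2 - y ^ 2) * c ≤ 2 * M * (x - y) := by
  nlinarith [mul_nonneg (sub_nonneg.2 hy) hc, mul_nonneg (sub_nonneg.2 hy) (sub_nonneg.2 hM)]

variable {E : Type*} [SeminormedAddCommGroup E]

theorem sum_Ico_sq_sub_sq_mul_norm_le {w : ℕ → ℝ} (hw : Monotone w) {v : ℕ → E} {M : ℝ}
    {m n : ℕ} (hmn : m ≤ n) (hM : ∀ k ∈ Ico m n, w (k + 1) * ‖v (k + 1)‖ ≤ M) :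
    ∑ k ∈ Ico m n, (w (k + 1) ^ 2 - w k ^ 2) * ‖v (k + 1)‖ ≤ 2 * M * (w n - w m) := by
  calc ∑ k ∈ Ico m n, (w (k + 1) ^ 2 - w k ^ 2) * ‖v (k + 1)‖
      ≤ ∑ k ∈ Ico m n, 2 * M * (w (k + 1) - w k) := sum_le_sum fun k hk =>
        sq_sub_sq_mul_le (hw k.le_succ) (norm_nonneg _) (hM k hk)
    _ = 2 * M * (w n - w m) := by rw [← mul_sum, sum_Ico_sub w hmn]

variable [NormedSpace ℝ E]

theorem norm_sum_Icc_smul_sub_le {a : ℕ → ℝ} (ha : Monotone a) (ha1 : 0 ≤ a 1) (v : ℕ → E)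
    {n : ℕ} (hn : 1 ≤ n) :
    ‖∑ k ∈ Icc 1 n, a k • (v (k + 1) - v k)‖ ≤
      a n * ‖v (n + 1)‖ + a 1 * ‖v 1‖ + ∑ k ∈ Ico 1 n, (a (k + 1) - a k) * ‖v (k + 1)‖ := by
  rw [sum_Icc_smul_sub_by_parts a v hn]
  refine (norm_sub_le _ _).trans (add_le_add ((norm_sub_le _ _).trans (add_le_add ?_ ?_)) ?_)
  · rw [norm_smul, Real.norm_of_nonneg (ha1.trans (ha hn))]
  · rw [norm_smul, Real.norm_of_nonneg ha1]
  · refine (norm_sum_le _ _).trans (sum_le_sum fun k _ => ?_)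
    rw [norm_smul, Real.norm_of_nonneg (sub_nonneg.2 (ha k.le_succ))]

theorem norm_sum_Icc_sq_smul_sub_le {w ℓ : ℕ → ℝ} (hw : Monotone w) (hw0 : ∀ k, 0 ≤ w k)
    (hℓ : Monotone ℓ) {v : ℕ → E} {N : ℕ} (hN : 1 ≤ N) (hv : ∀ k, N ≤ k → w k * ‖v k‖ ≤ ℓ k)
    {n : ℕ} (hn : N ≤ n) :
    ‖∑ k ∈ Icc 1 n, w k ^ 2 • (v (k + 1) - v k)‖ ≤
      (w 1 ^ 2 * ‖v 1‖ + ∑ k ∈ Ico 1 N, (w (k + 1) ^ 2 - w k ^ 2) * ‖v (k + 1)‖) +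
        w n * ℓ (n + 1) + 2 * ℓ n * w n := by
  have hw2 : Monotone fun k => w k ^ 2 := fun i j hij => pow_le_pow_left₀ (hw0 i) (hw hij) 2
  have hℓn : 0 ≤ ℓ n := (mul_nonneg (hw0 n) (norm_nonneg _)).trans (hv n hn)
  have hlast : w n ^ 2 * ‖v (n + 1)‖ ≤ w n * ℓ (n + 1) := by
    rw [sq, mul_assoc]
    exact mul_le_mul_of_nonneg_left
      ((mul_le_mul_of_nonneg_right (hw n.le_succ) (norm_nonneg _)).trans (hv _ (by omega)))
      (hw0 n)
  have htail : ∑ k ∈ Ico N n, (w (k + 1) ^ 2 - w k ^ 2) * ‖v (k + 1)‖ ≤ 2 * ℓ n * w n := by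
    refine (sum_Ico_sq_sub_sq_mul_norm_le (M := ℓ n) hw hn fun k hk => ?_).trans ?_
    · have hk := mem_Ico.1 hk
      exact (hv _ (by omega)).trans (hℓ (by omega))
    · nlinarith [hw0 N]
  refine (norm_sum_Icc_smul_sub_le hw2 (sq_nonneg _) v (hN.trans hn)).trans ?_
  rw [← sum_Ico_consecutive _ hN hn]
  linarith

theorem isBigO_norm_sum_Icc_sq_smul_sub {w ℓ : ℕ → ℝ} (hw : Monotone w) (hw0 : ∀ k, 0 ≤ w k)
    (hℓ : Monotone ℓ) (hℓ0 : ∀ k, 0 ≤ ℓ k) (hℓ_succ : (fun n => ℓ (n + 1)) =O[atTop] ℓ)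
    (h_one : (fun _ => (1 : ℝ)) =O[atTop] fun n => w n * ℓ n) {v : ℕ → E}
    (hv : (fun k => w k * ‖v k‖) =O[atTop] ℓ) :
    (fun n => ‖∑ k ∈ Icc 1 n, w k ^ 2 • (v (k + 1) - v k)‖) =O[atTop] fun n => w n * ℓ n := by
  obtain ⟨C, hC0, hC⟩ := hv.exists_nonneg
  obtain ⟨N, hN⟩ := eventually_atTop.1 hC.bound
  set N' := max N 1
  set D := w 1 ^ 2 * ‖v 1‖ + ∑ k ∈ Ico 1 N', (w (k + 1) ^ 2 - w k ^ 2) * ‖v (k + 1)‖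
  have hbound : ∀ n, N' ≤ n → ‖∑ k ∈ Icc 1 n, w k ^ 2 • (v (k + 1) - v k)‖ ≤
      D + C * (w n * ℓ (n + 1)) + 2 * C * (w n * ℓ n) := by
    intro n hn
    have h := norm_sum_Icc_sq_smul_sub_le (ℓ := fun k => C * ℓ k) hw hw0
      (fun i j hij => mul_le_mul_of_nonneg_left (hℓ hij) hC0) (le_max_right N 1)
      (fun k hk => by
        simpa [abs_of_nonneg (hw0 k), abs_of_nonneg (hℓ0 k)] using hN k (le_of_max_le_left hk))
      hn
    linarith
  have hsum : (fun n => D + C * (w n * ℓ (n + 1)) + 2 * C * (w n * ℓ n)) =O[atTop]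
      fun n => w n * ℓ n :=
    ((h_one.const_mul_left D).congr_left (fun _ => mul_one D)).add
      (((isBigO_refl w atTop).mul hℓ_succ).const_mul_left C) |>.add
      ((isBigO_refl _ atTop).const_mul_left _)
  refine (IsBigO.of_bound' ?_).trans hsum
  filter_upwards [eventually_ge_atTop N'] with n hn
  rw [norm_norm]
  exact (hbound n hn).trans (le_abs_self _)

end SummationByParts

section LogAsymptotics

theorem monotone_log_natCast : Monotone fun k : ℕ => Real.log k := by
  intro i j hij
  rcases Nat.eq_zero_or_pos i with rfl | hi
  · simpa using Real.log_natCast_nonneg j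
  · exact Real.log_le_log (by exact_mod_cast hi) (by exact_mod_cast hij)

theorem tendsto_log_natCast_atTop : Tendsto (fun k : ℕ => Real.log k) atTop atTop :=
  Real.tendsto_log_atTop.comp tendsto_natCast_atTop_atTop

theorem isBigO_log_natCast_succ :
    (fun n : ℕ => Real.log ((n + 1 : ℕ) : ℝ)) =O[atTop] fun n : ℕ => Real.log n := by
  refine IsBigO.of_bound 2 ?_
  filter_upwards [eventually_ge_atTop 2] with n hn
  have hn' : (2 : ℝ) ≤ n := by exact_mod_cast hn
  rw [Real.norm_of_nonneg (Real.log_natCast_nonneg _),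
    Real.norm_of_nonneg (Real.log_natCast_nonneg _)]
  calc Real.log ((n + 1 : ℕ) : ℝ) ≤ Real.log ((n : ℝ) ^ 2) :=
        Real.log_le_log (by positivity) (by push_cast; nlinarith)
    _ = 2 * Real.log n := by rw [Real.log_pow]; norm_num

theorem const_isBigO_log_natCast (c : ℝ) :
    (fun _ : ℕ => c) =O[atTop] fun k : ℕ => Real.log k :=
  (isLittleO_const_left.2 <| Or.inr <|
    tendsto_norm_atTop_atTop.comp tendsto_log_natCast_atTop).isBigO

theorem one_isBigO_rpow_mul_log_natCast {c : ℝ} (hc : 0 < c) :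
    (fun _ => (1 : ℝ)) =O[atTop] fun n : ℕ => (n : ℝ) ^ c * Real.log n :=
  ((isLittleO_one_left_iff ℝ).2 <| tendsto_norm_atTop_atTop.comp <|
    ((tendsto_rpow_atTop hc).comp tendsto_natCast_atTop_atTop).atTop_mul_atTop₀
      tendsto_log_natCast_atTop).isBigO

theorem tendsto_rpow_mul_log_atTop_zero {c : ℝ} (hc : c < 0) :
    Tendsto (fun x : ℝ => x ^ c * Real.log x) atTop (𝓝 0) :=
  (isLittleO_log_rpow_atTop (neg_pos.2 hc)).tendsto_div_nhds_zero.congr' <|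
    (eventually_gt_atTop 0).mono fun x hx => by
      rw [Real.rpow_neg hx.le, div_inv_eq_mul, mul_comm]

end LogAsymptotics

section StepSizes

variable {b β₀ : ℝ} {β u : ℕ → ℝ}

theorem inv_eq_of_eq_mul_rpow_neg (hβ : ∀ n : ℕ, β n = β₀ * (n : ℝ) ^ (-b)) (k : ℕ) :
    (β k)⁻¹ = β₀⁻¹ * ((k : ℝ) ^ (b / 2)) ^ 2 := by
  rw [hβ, Real.rpow_neg (Nat.cast_nonneg k), mul_inv, inv_inv, ← Real.rpow_natCast,
    ← Real.rpow_mul (Nat.cast_nonneg k)]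
  norm_num

/-- `u k = β₀ s` with `1 ≤ s ≤ k`; the case `β₀ = 0` holds because `Real.log 0 = 0`. -/
theorem abs_log_sum_le (hb : 0 ≤ b) (hβ : ∀ n : ℕ, β n = β₀ * (n : ℝ) ^ (-b))
    (hu : ∀ n, u n = ∑ k ∈ Icc 1 n, β k) {k : ℕ} (hk : 1 ≤ k) :
    |Real.log (u k)| ≤ |Real.log β₀| + Real.log k := by
  set s := ∑ j ∈ Icc 1 k, (j : ℝ) ^ (-b)
  have hus : u k = β₀ * s := by simp only [hu, hβ, s, mul_sum]
  have hs1 : 1 ≤ s := by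
    simpa using single_le_sum (f := fun j : ℕ => (j : ℝ) ^ (-b))
      (fun j _ => Real.rpow_nonneg (Nat.cast_nonneg j) _) (mem_Icc.2 ⟨le_rfl, hk⟩)
  have hsk : s ≤ k := by
    refine (sum_le_sum fun j hj => Real.rpow_le_one_of_one_le_of_nonpos
      (by exact_mod_cast (mem_Icc.1 hj).1) (neg_nonpos.2 hb)).trans ?_
    simp
  rcases eq_or_ne β₀ 0 with rfl | hβ₀
  · simp [hus, Real.log_natCast_nonneg]
  rw [hus, Real.log_mul hβ₀ (by positivity)]
  refine (abs_add_le _ _).trans (add_le_add_right ?_ _)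
  rw [abs_of_nonneg (Real.log_nonneg hs1)]
  exact Real.log_le_log (by positivity) hsk

theorem isBigO_log_sum (hb : 0 ≤ b) (hβ : ∀ n : ℕ, β n = β₀ * (n : ℝ) ^ (-b))
    (hu : ∀ n, u n = ∑ k ∈ Icc 1 n, β k) :
    (fun k => Real.log (u k)) =O[atTop] fun k : ℕ => Real.log k := by
  refine (IsBigO.of_bound' ?_).trans
    ((const_isBigO_log_natCast |Real.log β₀|).add (isBigO_refl _ _))
  filter_upwards [eventually_ge_atTop 1] with k hk
  rw [Real.norm_eq_abs, Real.norm_of_nonneg (by positivity)]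
  exact abs_log_sum_le hb hβ hu hk

theorem isBigO_rpow_mul_norm {E : Type*} [SeminormedAddCommGroup E] (hb : 0 ≤ b)
    (hβ : ∀ n : ℕ, β n = β₀ * (n : ℝ) ^ (-b)) (hu : ∀ n, u n = ∑ k ∈ Icc 1 n, β k) {θ : ℕ → E}
    (hθ : (fun n => ‖θ n‖) =O[atTop] fun n => Real.sqrt (β n * Real.log (u n))) :
    (fun k : ℕ => (k : ℝ) ^ (b / 2) * ‖θ k‖) =O[atTop] fun k : ℕ => Real.log k := by
  have hlog1 : ∀ᶠ k : ℕ in atTop, 1 ≤ Real.log k :=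
    tendsto_log_natCast_atTop.eventually_ge_atTop 1
  have hscale : (fun k : ℕ => (k : ℝ) ^ (b / 2) * Real.sqrt (β k * Real.log (u k))) =ᶠ[atTop]
      fun k => Real.sqrt (β₀ * Real.log (u k)) := by
    filter_upwards [eventually_ge_atTop 1] with k hk
    have hk0 : (0 : ℝ) < k := by exact_mod_cast hk
    rw [hβ, mul_comm β₀, mul_assoc, Real.sqrt_mul (by positivity), Real.sqrt_eq_rpow,
      ← Real.rpow_mul hk0.le, ← mul_assoc, ← Real.rpow_add hk0]
    ring_nf
    rw [Real.rpow_zero, one_mul]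
  have hsqrt : (fun k : ℕ => Real.sqrt (Real.log k)) =O[atTop] fun k : ℕ => Real.log k :=
    IsBigO.of_bound' <| by
      filter_upwards [hlog1] with k hk
      rw [Real.norm_of_nonneg (Real.sqrt_nonneg _), Real.norm_of_nonneg (by linarith)]
      exact Real.sqrt_le_self_iff.2 (Or.inr hk)
  exact ((isBigO_refl _ _).mul hθ).congr' (.refl _ _) hscale |>.trans
    (((isBigO_log_sum hb hβ hu).const_mul_left β₀).sqrt
      (hlog1.mono fun k hk => by simp only [Pi.zero_apply]; linarith)) |>.trans hsqrt

end StepSizes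

theorem abel_fast_component_general
    {d : ℕ} {Ω : Type} [mΩ : MeasurableSpace Ω] (P : Measure Ω)
    {b β₀ : ℝ} (hb1 : 1/2 < b) (hb2 : b < 1)
    (β u : ℕ → ℝ)
    (hβ : ∀ n : ℕ, β n = β₀ * (n : ℝ) ^ (-b))
    (hu : ∀ n, u n = ∑ k ∈ Finset.Icc 1 n, β k)
    (θ : ℕ → Ω → EuclideanSpace ℝ (Fin d))
    (hθ : ∀ᵐ ω ∂P, (fun n : ℕ => ‖θ n ω‖) =O[atTop] fun n : ℕ => Real.sqrt (β n * Real.log (u n))) :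
    ∀ᵐ ω ∂P,
      ((fun n : ℕ => (Real.sqrt (n : ℝ))⁻¹ * ‖∑ k ∈ Finset.Icc 1 n, (β k)⁻¹ • (θ (k+1) ω - θ k ω)‖)
        =O[atTop] fun n : ℕ => (n : ℝ) ^ ((b - 1)/2) * Real.log (n : ℝ)) ∧
      Tendsto (fun n : ℕ => (Real.sqrt (n : ℝ))⁻¹ •
          ∑ k ∈ Finset.Icc 1 n, (β k)⁻¹ • (θ (k+1) ω - θ k ω))
        atTop (nhds 0) := by
  have hb : 0 < b := by linarith
  set w : ℕ → ℝ := fun k => (k : ℝ) ^ (b / 2)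
  have hw : Monotone w := fun i j hij =>
    Real.rpow_le_rpow (Nat.cast_nonneg _) (Nat.cast_le.2 hij) (by positivity)
  have hscale : (fun n : ℕ => (Real.sqrt n)⁻¹ * (w n * Real.log n)) =ᶠ[atTop]
      fun n : ℕ => (n : ℝ) ^ ((b - 1) / 2) * Real.log n := by
    filter_upwards [eventually_ge_atTop 1] with n hn
    have hn0 : (0 : ℝ) < n := by exact_mod_cast hn
    rw [Real.sqrt_eq_rpow, ← Real.rpow_neg hn0.le, ← mul_assoc, ← Real.rpow_add hn0]
    ring_nf
  filter_upwards [hθ] with ω hω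
  have hS : (fun n => ‖∑ k ∈ Icc 1 n, (β k)⁻¹ • (θ (k + 1) ω - θ k ω)‖) =O[atTop]
      fun n => w n * Real.log n := by
    simp_rw [inv_eq_of_eq_mul_rpow_neg hβ, mul_smul, ← smul_sum, norm_smul]
    exact (isBigO_norm_sum_Icc_sq_smul_sub hw (fun k => by positivity) monotone_log_natCast
      Real.log_natCast_nonneg isBigO_log_natCast_succ
      (one_isBigO_rpow_mul_log_natCast (by positivity))
      (isBigO_rpow_mul_norm hb.le hβ hu hω)).const_mul_left _
  have hO := ((isBigO_refl (fun n : ℕ => (Real.sqrt n)⁻¹) atTop).mul hS).congr' (.refl _ _) hscale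
  refine ⟨hO, ?_⟩
  rw [tendsto_zero_iff_norm_tendsto_zero]
  refine (hO.trans_tendsto ((tendsto_rpow_mul_log_atTop_zero (c := (b - 1) / 2) (by linarith)).comp
    tendsto_natCast_atTop_atTop)).congr fun n => ?_
  rw [norm_smul, Real.norm_of_nonneg (inv_nonneg.2 (Real.sqrt_nonneg _))]

/-- **Abel-summation bound for the fast component**: if `‖θ_n‖ = O(√(β_n log u_n))` a.s. with
`β_n = β₀ n^{-b}`, `b ∈ (1/2,1)`, then a.s.
`n^{-1/2} ‖Σ_{k≤n} β_k⁻¹ (θ_{k+1} - θ_k)‖ = O(n^{(b-1)/2} log n)`, and in particular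
`n^{-1/2} Σ_{k≤n} β_k⁻¹ (θ_{k+1} - θ_k) → 0` a.s. -/
theorem abel_fast_component
    {d : ℕ} {Ω : Type} [mΩ : MeasurableSpace Ω] (P : Measure Ω) [IsProbabilityMeasure P]
    {b β₀ : ℝ} (hb1 : 1/2 < b) (hb2 : b < 1) (hβ₀ : 0 < β₀)
    (β u : ℕ → ℝ)
    (hβ : ∀ n : ℕ, β n = β₀ * (n : ℝ) ^ (-b))
    (hu : ∀ n, u n = ∑ k ∈ Finset.Icc 1 n, β k)
    (θ : ℕ → Ω → EuclideanSpace ℝ (Fin d))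
    (hθ : ∀ᵐ ω ∂P, (fun n : ℕ => ‖θ n ω‖) =O[atTop] fun n : ℕ => Real.sqrt (β n * Real.log (u n))) :
    ∀ᵐ ω ∂P,
      ((fun n : ℕ => (Real.sqrt (n : ℝ))⁻¹ * ‖∑ k ∈ Finset.Icc 1 n, (β k)⁻¹ • (θ (k+1) ω - θ k ω)‖)
        =O[atTop] fun n : ℕ => (n : ℝ) ^ ((b - 1)/2) * Real.log (n : ℝ)) ∧
      Tendsto (fun n : ℕ => (Real.sqrt (n : ℝ))⁻¹ •
          ∑ k ∈ Finset.Icc 1 n, (β k)⁻¹ • (θ (k+1) ω - θ k ω))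
        atTop (nhds 0) :=
  abel_fast_component_general (mΩ := mΩ) P hb1 hb2 β u hβ hu θ hθ
end

section
/- (Abel-summation bound for the slow component). Let a ∈ (1/2, 1), γ₀ > 0, γ_n = γ₀ n^{-a} and s_n = Σ_{k=1}^n γ_k. If (μ_n) is an ℝ^{d'}-valued random sequence with ‖μ_n‖ = O(√(γ_n log s_n)) almost surely, then almost surely (1/√n) ‖Σ_{k=1}^n γ_k^{-1}(μ_{k+1} - μ_k)‖ = O(n^{-(1-a)/2} log n); in particular (1/√n) Σ_{k=1}^n γ_k^{-1}(μ_{k+1} - μ_k) → 0 almost surely. -/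
open MeasureTheory Filter Asymptotics Matrix

/-!
Abel summation moves the differences onto the weights:
`∑ γₖ⁻¹ (μₖ₊₁ - μₖ) = γₙ₊₁⁻¹ μₙ₊₁ - γ₁⁻¹ μ₁ - ∑ (γₖ₊₁⁻¹ - γₖ⁻¹) μₖ₊₁`, and `γₖ⁻¹ = γ₀⁻¹ kᵃ` is
increasing. Since `sₙ ≤ γ₀ n`, the hypothesis gives `‖μₖ‖ = O(k^{-a/2} log k)`, so the boundary
term is `O(n^{a/2} log n)`. In the remaining sum the weights telescope:
`((k+1)ᵃ - kᵃ) (k+1)^{-a/2} ≤ 2 ((k+1)^{a/2} - k^{a/2})` (this is `(x² - y²)/x ≤ 2 (x - y)`),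
so it is `O(n^{a/2} log n)` as well. Dividing by `√n` leaves `n^{-(1-a)/2} log n → 0`.
-/

open Finset Real Topology

theorem sum_Icc_smul_sub_eq {R E : Type*} [CommRing R] [AddCommGroup E] [Module R E]
    (c : ℕ → R) (f : ℕ → E) (n : ℕ) :
    ∑ k ∈ Icc 1 n, c k • (f (k + 1) - f k)
      = c (n + 1) • f (n + 1) - c 1 • f 1 - ∑ k ∈ Icc 1 n, (c (k + 1) - c k) • f (k + 1) := by
  induction n with
  | zero => simp
  | succ n ih =>
    rw [sum_Icc_succ_top (by omega), ih, sum_Icc_succ_top (by omega)]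
    module

theorem norm_sum_smul_sub_le {E : Type*} [SeminormedAddCommGroup E] [NormedSpace ℝ E]
    {c : ℕ → ℝ} (hc : Monotone c) (hc0 : ∀ k, 0 ≤ c k) (f : ℕ → E) (n : ℕ) :
    ‖∑ k ∈ Icc 1 n, c k • (f (k + 1) - f k)‖
      ≤ c (n + 1) * ‖f (n + 1)‖ + c 1 * ‖f 1‖
        + ∑ k ∈ Icc 1 n, (c (k + 1) - c k) * ‖f (k + 1)‖ := by
  rw [sum_Icc_smul_sub_eq]
  calc _ ≤ ‖c (n + 1) • f (n + 1)‖ + ‖c 1 • f 1‖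
          + ∑ k ∈ Icc 1 n, ‖(c (k + 1) - c k) • f (k + 1)‖ :=
        (norm_sub_le _ _).trans (add_le_add (norm_sub_le _ _) (norm_sum_le _ _))
    _ = _ := by
      have hdc (k : ℕ) : 0 ≤ c (k + 1) - c k := sub_nonneg.2 (hc k.le_succ)
      simp only [norm_smul, Real.norm_of_nonneg (hc0 _), Real.norm_of_nonneg (hdc _)]

theorem rpow_sub_rpow_mul_rpow_neg_half_le {a x y : ℝ} (ha : 0 ≤ a) (hy : 0 ≤ y) (hyx : y ≤ x)
    (hx : 0 < x) :
    (x ^ a - y ^ a) * x ^ (-(a / 2)) ≤ 2 * (x ^ (a / 2) - y ^ (a / 2)) := by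
  have hsq {z : ℝ} (hz : 0 ≤ z) : z ^ a = (z ^ (a / 2)) ^ 2 := by
    rw [← rpow_natCast, ← rpow_mul hz]; norm_num
  have hu : 0 < x ^ (a / 2) := by positivity
  have hvu : y ^ (a / 2) ≤ x ^ (a / 2) := rpow_le_rpow hy hyx (by linarith)
  rw [hsq hx.le, hsq hy, rpow_neg hx.le, ← div_eq_mul_inv, div_le_iff₀ hu]
  nlinarith [sq_nonneg (x ^ (a / 2) - y ^ (a / 2))]

theorem sum_Icc_rpow_sub_rpow_mul_le {a : ℝ} (ha : 0 ≤ a) (n : ℕ) :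
    ∑ k ∈ Icc 1 n, (((k : ℝ) + 1) ^ a - (k : ℝ) ^ a) * ((k : ℝ) + 1) ^ (-(a / 2))
      ≤ 2 * ((n : ℝ) + 1) ^ (a / 2) := by
  induction n with
  | zero => simp
  | succ n ih =>
    rw [sum_Icc_succ_top (by omega)]
    have := rpow_sub_rpow_mul_rpow_neg_half_le ha (y := (n : ℝ) + 1) (x := (n : ℝ) + 1 + 1)
      (by positivity) (by linarith) (by positivity)
    push_cast
    linarith

theorem norm_sum_rpow_smul_sub_le {E : Type*} [SeminormedAddCommGroup E] [NormedSpace ℝ E]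
    {a B : ℝ} (ha : 0 ≤ a) (hB : 0 ≤ B) {L : ℕ → ℝ} (hL : Monotone L) (hL0 : ∀ m, 0 ≤ L m)
    {f : ℕ → E} (hf : ∀ m, 2 ≤ m → ‖f m‖ ≤ B * ((m : ℝ) ^ (-(a / 2)) * L m)) {n : ℕ}
    (hn : 1 ≤ n) :
    ‖∑ k ∈ Icc 1 n, (k : ℝ) ^ a • (f (k + 1) - f k)‖
      ≤ ‖f 1‖ + 3 * B * (((n : ℝ) + 1) ^ (a / 2) * L (n + 1)) := by
  have hc : Monotone fun k : ℕ => (k : ℝ) ^ a := fun i j hij =>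
    rpow_le_rpow (Nat.cast_nonneg i) (Nat.cast_le.2 hij) ha
  refine (norm_sum_smul_sub_le hc (fun k => by positivity) f n).trans ?_
  push_cast
  have hn1 : (0 : ℝ) < n + 1 := by positivity
  have hlast : ((n : ℝ) + 1) ^ a * ‖f (n + 1)‖ ≤ B * (((n : ℝ) + 1) ^ (a / 2) * L (n + 1)) :=
    calc ((n : ℝ) + 1) ^ a * ‖f (n + 1)‖
        ≤ ((n : ℝ) + 1) ^ a * (B * (((n : ℝ) + 1) ^ (-(a / 2)) * L (n + 1))) := by
          gcongr; exact_mod_cast hf (n + 1) (by omega)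
      _ = B * ((((n : ℝ) + 1) ^ a * ((n : ℝ) + 1) ^ (-(a / 2))) * L (n + 1)) := by ring
      _ = B * (((n : ℝ) + 1) ^ (a / 2) * L (n + 1)) := by
          rw [← rpow_add hn1]; ring_nf
  have hterm : ∀ k ∈ Icc 1 n, (((k : ℝ) + 1) ^ a - (k : ℝ) ^ a) * ‖f (k + 1)‖
      ≤ B * L (n + 1) * ((((k : ℝ) + 1) ^ a - (k : ℝ) ^ a) * ((k : ℝ) + 1) ^ (-(a / 2))) := by
    intro k hk
    have hk1 : 1 ≤ k ∧ k ≤ n := mem_Icc.1 hk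
    have hfk : ‖f (k + 1)‖ ≤ B * (((k : ℝ) + 1) ^ (-(a / 2)) * L (k + 1)) := by
      exact_mod_cast hf (k + 1) (by omega)
    have hdk : 0 ≤ ((k : ℝ) + 1) ^ a - (k : ℝ) ^ a := sub_nonneg.2 (by exact_mod_cast hc k.le_succ)
    calc (((k : ℝ) + 1) ^ a - (k : ℝ) ^ a) * ‖f (k + 1)‖
        ≤ (((k : ℝ) + 1) ^ a - (k : ℝ) ^ a) * (B * (((k : ℝ) + 1) ^ (-(a / 2)) * L (n + 1))) := by
          gcongr
          refine hfk.trans ?_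
          gcongr
          exact hL (by omega)
      _ = _ := by ring
  have hsum := (sum_le_sum hterm).trans_eq (mul_sum _ _ _).symm
  have := mul_le_mul_of_nonneg_left (sum_Icc_rpow_sub_rpow_mul_le ha n)
    (mul_nonneg hB (hL0 (n + 1)))
  simp only [one_rpow, one_mul]
  linarith

theorem add_one_rpow_mul_log_le {r x : ℝ} (hr : 0 ≤ r) (hx : 2 ≤ x) :
    (x + 1) ^ r * log (x + 1) ≤ 2 ^ (r + 1) * (x ^ r * log x) := by
  have hpow : (x + 1) ^ r ≤ 2 ^ r * x ^ r := by
    rw [← mul_rpow zero_le_two (by linarith)]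
    exact rpow_le_rpow (by linarith) (by linarith) hr
  have hlog : log (x + 1) ≤ 2 * log x := by
    rw [← log_rpow (by linarith), rpow_two]
    exact log_le_log (by linarith) (by nlinarith)
  rw [rpow_add_one two_ne_zero]
  calc (x + 1) ^ r * log (x + 1) ≤ (2 ^ r * x ^ r) * (2 * log x) := by
        gcongr
        · exact log_nonneg (by linarith)
    _ = _ := by ring

theorem sum_Icc_mul_rpow_neg_le {a γ₀ : ℝ} (ha : 0 ≤ a) (hγ₀ : 0 ≤ γ₀) (n : ℕ) :
    ∑ k ∈ Icc 1 n, γ₀ * (k : ℝ) ^ (-a) ≤ γ₀ * n := by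
  calc ∑ k ∈ Icc 1 n, γ₀ * (k : ℝ) ^ (-a) ≤ ∑ _k ∈ Icc 1 n, γ₀ := by
        refine sum_le_sum fun k hk => mul_le_of_le_one_right hγ₀ ?_
        exact rpow_le_one_of_one_le_of_nonpos (by exact_mod_cast (mem_Icc.1 hk).1) (by linarith)
    _ = γ₀ * n := by simp [mul_comm]

theorem sqrt_mul_log_sum_le {a γ₀ : ℝ} (ha : 0 ≤ a) (hγ₀ : 0 < γ₀) {m : ℕ}
    (hm : max 1 (log γ₀) ≤ log m) :
    √(γ₀ * (m : ℝ) ^ (-a) * log (∑ k ∈ Icc 1 m, γ₀ * (k : ℝ) ^ (-a)))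
      ≤ √(2 * γ₀) * ((m : ℝ) ^ (-(a / 2)) * log m) := by
  have hlog1 : 1 ≤ log m := (le_max_left _ _).trans hm
  have hm0 : (0 : ℝ) < m := by
    rcases m.eq_zero_or_pos with rfl | h
    · norm_num at hlog1
    · exact_mod_cast h
  have hs0 : 0 < ∑ k ∈ Icc 1 m, γ₀ * (k : ℝ) ^ (-a) :=
    sum_pos (fun k hk => by have := (mem_Icc.1 hk).1; positivity)
      (nonempty_Icc.2 (by exact_mod_cast hm0))
  have hlogs : log (∑ k ∈ Icc 1 m, γ₀ * (k : ℝ) ^ (-a)) ≤ 2 * log m ^ 2 := by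
    refine (log_le_log hs0 (sum_Icc_mul_rpow_neg_le ha hγ₀.le m)).trans ?_
    rw [log_mul hγ₀.ne' hm0.ne']
    nlinarith [le_max_right 1 (log γ₀)]
  have hpow : (m : ℝ) ^ (-a) = ((m : ℝ) ^ (-(a / 2))) ^ 2 := by
    rw [← rpow_natCast, ← rpow_mul hm0.le]; norm_num
  calc √(γ₀ * (m : ℝ) ^ (-a) * log (∑ k ∈ Icc 1 m, γ₀ * (k : ℝ) ^ (-a)))
      ≤ √(2 * γ₀ * ((m : ℝ) ^ (-(a / 2)) * log m) ^ 2) := by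
        refine sqrt_le_sqrt ?_
        calc γ₀ * (m : ℝ) ^ (-a) * log (∑ k ∈ Icc 1 m, γ₀ * (k : ℝ) ^ (-a))
            ≤ γ₀ * (m : ℝ) ^ (-a) * (2 * log m ^ 2) := by gcongr
          _ = _ := by rw [hpow]; ring
    _ = √(2 * γ₀) * ((m : ℝ) ^ (-(a / 2)) * log m) := by
        rw [sqrt_mul (by positivity), sqrt_sq (by positivity)]

theorem isBigO_sqrt_mul_log_sum {a γ₀ : ℝ} (ha : 0 ≤ a) (hγ₀ : 0 < γ₀) :
    (fun m : ℕ => √(γ₀ * (m : ℝ) ^ (-a) * log (∑ k ∈ Icc 1 m, γ₀ * (k : ℝ) ^ (-a))))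
      =O[atTop] fun m : ℕ => (m : ℝ) ^ (-(a / 2)) * log m := by
  refine IsBigO.of_bound √(2 * γ₀) ?_
  have hlog : ∀ᶠ m : ℕ in atTop, max 1 (log γ₀) ≤ log m :=
    tendsto_natCast_atTop_atTop.eventually (tendsto_log_atTop.eventually_ge_atTop _)
  filter_upwards [hlog] with m hm
  have hlog0 : 0 ≤ log m := zero_le_one.trans ((le_max_left _ _).trans hm)
  rw [norm_of_nonneg (sqrt_nonneg _), norm_of_nonneg (by positivity)]
  exact sqrt_mul_log_sum_le ha hγ₀ hm

theorem isBigO_norm_sum_rpow_smul_sub {E : Type*} [SeminormedAddCommGroup E] [NormedSpace ℝ E]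
    {a : ℝ} (ha : 0 ≤ a) {f : ℕ → E}
    (hf : (fun m => ‖f m‖) =O[atTop] fun m : ℕ => (m : ℝ) ^ (-(a / 2)) * log m) :
    (fun n : ℕ => ‖∑ k ∈ Icc 1 n, (k : ℝ) ^ a • (f (k + 1) - f k)‖)
      =O[atTop] fun n : ℕ => (n : ℝ) ^ (a / 2) * log n := by
  obtain ⟨B, hB, hfB⟩ := bound_of_isBigO_nat_atTop hf
  have hf' (m : ℕ) (hm : 2 ≤ m) : ‖f m‖ ≤ B * ((m : ℝ) ^ (-(a / 2)) * log m) := by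
    have hm' : (2 : ℝ) ≤ m := by exact_mod_cast hm
    have hpos : 0 < (m : ℝ) ^ (-(a / 2)) * log m :=
      mul_pos (by positivity) (log_pos (by linarith))
    simpa [norm_of_nonneg hpos.le] using hfB hpos.ne'
  have hlog : Monotone fun m : ℕ => log m := fun i j hij => by
    rcases i.eq_zero_or_pos with rfl | hi
    · simpa using log_natCast_nonneg j
    · exact log_le_log (by exact_mod_cast hi) (by exact_mod_cast hij)
  refine IsBigO.of_bound (‖f 1‖ / log 2 + 3 * B * 2 ^ (a / 2 + 1)) ?_
  filter_upwards [eventually_ge_atTop 2] with n hn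
  have hn' : (2 : ℝ) ≤ n := by exact_mod_cast hn
  have hG : log 2 ≤ (n : ℝ) ^ (a / 2) * log n :=
    calc log 2 ≤ 1 * log n := by rw [one_mul]; exact log_le_log two_pos hn'
      _ ≤ (n : ℝ) ^ (a / 2) * log n :=
        mul_le_mul_of_nonneg_right (one_le_rpow (by linarith) (by linarith))
          (log_nonneg (by linarith))
  have hconst : ‖f 1‖ ≤ ‖f 1‖ / log 2 * ((n : ℝ) ^ (a / 2) * log n) := by
    rw [div_mul_eq_mul_div, le_div_iff₀ (log_pos one_lt_two)]
    exact mul_le_mul_of_nonneg_left hG (norm_nonneg _)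
  have hshift := mul_le_mul_of_nonneg_left
    (add_one_rpow_mul_log_le (r := a / 2) (by positivity) hn') (by positivity : 0 ≤ 3 * B)
  have hsum := norm_sum_rpow_smul_sub_le ha hB.le hlog (fun m => log_natCast_nonneg m) hf'
    (by omega : 1 ≤ n)
  push_cast at hsum
  rw [norm_norm, norm_of_nonneg (hG.trans' (log_pos one_lt_two).le)]
  linarith

theorem isBigO_inv_sqrt_mul_norm_sum {E : Type*} [SeminormedAddCommGroup E] [NormedSpace ℝ E]
    {a : ℝ} (ha : 0 ≤ a) (γ₀ : ℝ) {f : ℕ → E}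
    (hf : (fun m => ‖f m‖) =O[atTop] fun m : ℕ => (m : ℝ) ^ (-(a / 2)) * log m) :
    (fun n : ℕ => (√(n : ℝ))⁻¹ * ‖∑ k ∈ Icc 1 n, (γ₀ * (k : ℝ) ^ (-a))⁻¹ • (f (k + 1) - f k)‖)
      =O[atTop] fun n : ℕ => (n : ℝ) ^ (-((1 - a) / 2)) * log n := by
  have hsum (n : ℕ) : ∑ k ∈ Icc 1 n, (γ₀ * (k : ℝ) ^ (-a))⁻¹ • (f (k + 1) - f k)
      = γ₀⁻¹ • ∑ k ∈ Icc 1 n, (k : ℝ) ^ a • (f (k + 1) - f k) := by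
    simp only [smul_sum, smul_smul, mul_inv, rpow_neg (Nat.cast_nonneg _), inv_inv]
  simp only [hsum, norm_smul]
  refine ((isBigO_refl _ _).mul ((isBigO_norm_sum_rpow_smul_sub ha hf).const_mul_left _)).trans
    (IsBigO.of_bound' ?_)
  filter_upwards [eventually_gt_atTop 0] with n hn
  have hn' : (0 : ℝ) < n := by exact_mod_cast hn
  rw [sqrt_eq_rpow, ← rpow_neg hn'.le, ← mul_assoc, ← rpow_add hn',
    show -(1 / 2 : ℝ) + a / 2 = -((1 - a) / 2) by ring]

theorem tendsto_natCast_rpow_neg_mul_log {r : ℝ} (hr : 0 < r) :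
    Tendsto (fun n : ℕ => (n : ℝ) ^ (-r) * log n) atTop (𝓝 0) := by
  refine ((isLittleO_log_rpow_atTop hr).tendsto_div_nhds_zero.comp
    tendsto_natCast_atTop_atTop).congr fun n => ?_
  simp only [Function.comp_apply, rpow_neg (Nat.cast_nonneg n), div_eq_mul_inv, mul_comm]

theorem abel_slow_component_general
    {d' : ℕ} {Ω : Type} [mΩ : MeasurableSpace Ω] (P : Measure Ω)
    {a γ₀ : ℝ} (ha1 : 1/2 < a) (ha2 : a < 1) (hγ₀ : 0 < γ₀)
    (γ s : ℕ → ℝ)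
    (hγ : ∀ n : ℕ, γ n = γ₀ * (n : ℝ) ^ (-a))
    (hs : ∀ n, s n = ∑ k ∈ Finset.Icc 1 n, γ k)
    (μ : ℕ → Ω → EuclideanSpace ℝ (Fin d'))
    (hμ : ∀ᵐ ω ∂P, (fun n : ℕ => ‖μ n ω‖) =O[atTop] fun n : ℕ => Real.sqrt (γ n * Real.log (s n))) :
    ∀ᵐ ω ∂P,
      ((fun n : ℕ => (Real.sqrt (n : ℝ))⁻¹ * ‖∑ k ∈ Finset.Icc 1 n, (γ k)⁻¹ • (μ (k+1) ω - μ k ω)‖)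
        =O[atTop] fun n : ℕ => (n : ℝ) ^ (-((1 - a)/2)) * Real.log (n : ℝ)) ∧
      Tendsto (fun n : ℕ => (Real.sqrt (n : ℝ))⁻¹ •
          ∑ k ∈ Finset.Icc 1 n, (γ k)⁻¹ • (μ (k+1) ω - μ k ω))
        atTop (nhds 0) := by
  have ha0 : 0 ≤ a := by linarith
  obtain rfl : γ = fun n : ℕ => γ₀ * (n : ℝ) ^ (-a) := funext hγ
  obtain rfl : s = fun n : ℕ => ∑ k ∈ Icc 1 n, γ₀ * (k : ℝ) ^ (-a) := funext hs
  filter_upwards [hμ] with ω hω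
  have hO := isBigO_inv_sqrt_mul_norm_sum ha0 γ₀ (hω.trans (isBigO_sqrt_mul_log_sum ha0 hγ₀))
  refine ⟨hO, tendsto_zero_iff_norm_tendsto_zero.2 ?_⟩
  simpa only [norm_smul, norm_inv, norm_of_nonneg (sqrt_nonneg _)] using
    hO.trans_tendsto (tendsto_natCast_rpow_neg_mul_log (by linarith))

/-- **Abel-summation bound for the slow component**: if `‖μ_n‖ = O(√(γ_n log s_n))` a.s. with
`γ_n = γ₀ n^{-a}`, `a ∈ (1/2,1)`, then a.s.
`n^{-1/2} ‖Σ_{k≤n} γ_k⁻¹ (μ_{k+1} - μ_k)‖ = O(n^{-(1-a)/2} log n)`, and in particular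
`n^{-1/2} Σ_{k≤n} γ_k⁻¹ (μ_{k+1} - μ_k) → 0` a.s. -/
theorem abel_slow_component
    {d' : ℕ} {Ω : Type} [mΩ : MeasurableSpace Ω] (P : Measure Ω) [IsProbabilityMeasure P]
    {a γ₀ : ℝ} (ha1 : 1/2 < a) (ha2 : a < 1) (hγ₀ : 0 < γ₀)
    (γ s : ℕ → ℝ)
    (hγ : ∀ n : ℕ, γ n = γ₀ * (n : ℝ) ^ (-a))
    (hs : ∀ n, s n = ∑ k ∈ Finset.Icc 1 n, γ k)
    (μ : ℕ → Ω → EuclideanSpace ℝ (Fin d'))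
    (hμ : ∀ᵐ ω ∂P, (fun n : ℕ => ‖μ n ω‖) =O[atTop] fun n : ℕ => Real.sqrt (γ n * Real.log (s n))) :
    ∀ᵐ ω ∂P,
      ((fun n : ℕ => (Real.sqrt (n : ℝ))⁻¹ * ‖∑ k ∈ Finset.Icc 1 n, (γ k)⁻¹ • (μ (k+1) ω - μ k ω)‖)
        =O[atTop] fun n : ℕ => (n : ℝ) ^ (-((1 - a)/2)) * Real.log (n : ℝ)) ∧
      Tendsto (fun n : ℕ => (Real.sqrt (n : ℝ))⁻¹ •
          ∑ k ∈ Finset.Icc 1 n, (γ k)⁻¹ • (μ (k+1) ω - μ k ω))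
        atTop (nhds 0) :=
  abel_slow_component_general (mΩ := mΩ) P ha1 ha2 hγ₀ γ s hγ hs μ hμ
end

section
/- (Lemma 9, part 1: exponentially weighted sums at the fast time scale). Let b ∈ (1/2, 1], β₀ > 0, β_n = β₀ n^{-b}, u_n = Σ_{k=1}^n β_k, T > 0, (x_n) a sequence of positive real numbers, and Z_n^{(1)} = e^{-u_n T} Σ_{k=1}^n e^{u_k T} β_k x_k. Let (w_n) be a sequence satisfying Condition (C). If x_n = O(w_n), then for every T' ∈ (0, T), |Z_n^{(1)}| = O(e^{-u_n T'}·𝟙_{b=1} + w_n); and if x_n = o(w_n), then for every T' ∈ (0, T), |Z_n^{(1)}| = o(e^{-u_n T'}·𝟙_{b=1} + w_n). -/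
open MeasureTheory Filter Asymptotics Matrix

/-!
`Z` solves `Z (n + 1) = e^{-β (n + 1) T} Z n + β (n + 1) x (n + 1)`. If a positive sequence `B`
satisfies `e^{-β (n + 1) T} B n + c β (n + 1) w (n + 1) ≤ B (n + 1)` eventually, comparison with
this recursion gives `Z = O(B)` when `x = O(w)`, and `Z = o(B)` when `x = o(w)` and the
contribution `e^{-u n T}` of the initial terms is `o(B)`.

For `b < 1`, Condition (C) says that `w` decays slower than `e^{-θ u n}` for every `θ > 0`, so `w`
itself is such a `B`. For `b = 1` and `w n = n^{-ω} L n`, the sequence `w` decays like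
`e^{-(ω / β₀) u n}`: if `ω < β₀ T` then `B = e^{-u n T'} + w` works; otherwise `ω > β₀ T'` and,
since `u n ≤ β₀ (1 + log n)` and `L` grows slower than any power, `w = O(e^{-u n T'})`, so
`B = e^{-u n T'}` works.
-/

/-- `B` is, up to a constant factor, an eventual supersolution of the linear recursion
`V (n + 1) = a n * V n + s n * w (n + 1)`. -/
def IsSupersolution (a s w B : ℕ → ℝ) : Prop :=
  ∃ c > 0, ∀ᶠ n in atTop, a n * B n + c * (s n * w (n + 1)) ≤ B (n + 1)

theorem le_of_sub_mul_le_sub_mul {a V Φ : ℕ → ℝ} {N : ℕ} (ha : ∀ n, 0 ≤ a n)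
    (hN : V N ≤ Φ N) (hstep : ∀ n ≥ N, V (n + 1) - a n * V n ≤ Φ (n + 1) - a n * Φ n) :
    ∀ n ≥ N, V n ≤ Φ n := by
  intro n hn
  induction n, hn using Nat.le_induction with
  | base => exact hN
  | succ n hn ih => nlinarith [hstep n hn, mul_le_mul_of_nonneg_left ih (ha n)]

theorem abs_succ_sub_mul_abs_le {a s Z x : ℕ → ℝ} (ha : ∀ n, 0 ≤ a n) (hs : ∀ n, 0 ≤ s n)
    (hZ : ∀ n, Z (n + 1) = a n * Z n + s n * x (n + 1)) (n : ℕ) :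
    |Z (n + 1)| - a n * |Z n| ≤ s n * |x (n + 1)| := by
  have := abs_add_le (a n * Z n) (s n * x (n + 1))
  rw [abs_mul, abs_mul, abs_of_nonneg (ha n), abs_of_nonneg (hs n)] at this
  rw [hZ]
  linarith

namespace IsSupersolution

variable {a s w B Z x : ℕ → ℝ}

theorem add_of_eventually_mul_le {B' : ℕ → ℝ} (h : IsSupersolution a s w B)
    (hB' : ∀ᶠ n in atTop, a n * B' n ≤ B' (n + 1)) :
    IsSupersolution a s w fun n => B' n + B n := by
  obtain ⟨c, hc, hB⟩ := h
  exact ⟨c, hc, by filter_upwards [hB, hB'] with n h h'; linarith⟩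

theorem isBigO (h : IsSupersolution a s w B) (ha : ∀ n, 0 ≤ a n) (hs : ∀ n, 0 ≤ s n)
    (hw : ∀ n, 0 ≤ w n) (hB : ∀ n, 0 < B n) (hZ : ∀ n, Z (n + 1) = a n * Z n + s n * x (n + 1))
    (hx : x =O[atTop] w) : Z =O[atTop] B := by
  obtain ⟨c, hc, hdrift⟩ := h
  obtain ⟨C₀, hC₀, hxC₀⟩ := hx.exists_pos
  obtain ⟨N, hN⟩ := eventually_atTop.1
    (hdrift.and ((tendsto_add_atTop_nat 1).eventually hxC₀.bound))
  set C := max (C₀ / c) (|Z N| / B N)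
  have hC : C₀ ≤ C * c := (div_le_iff₀ hc).1 (le_max_left _ _)
  have hC0 : 0 ≤ C := (div_nonneg hC₀.le hc.le).trans (le_max_left _ _)
  have hbound : ∀ n ≥ N, |Z n| ≤ C * B n := by
    refine le_of_sub_mul_le_sub_mul ha ((div_le_iff₀ (hB N)).1 (le_max_right _ _)) ?_
    intro n hn
    obtain ⟨hdr, hxn⟩ := hN n hn
    rw [Real.norm_eq_abs, Real.norm_of_nonneg (hw _)] at hxn
    have hsx : s n * |x (n + 1)| ≤ C * (c * (s n * w (n + 1))) := by
      nlinarith [mul_le_mul_of_nonneg_left hxn (hs n), mul_nonneg (hs n) (hw (n + 1))]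
    nlinarith [abs_succ_sub_mul_abs_le ha hs hZ n, mul_le_mul_of_nonneg_left hdr hC0]
  refine IsBigO.of_bound C ?_
  filter_upwards [eventually_ge_atTop N] with n hn
  rw [Real.norm_eq_abs, Real.norm_of_nonneg (hB n).le]
  exact hbound n hn

theorem isLittleO {E : ℕ → ℝ} (h : IsSupersolution a s w B) (ha : ∀ n, 0 ≤ a n)
    (hs : ∀ n, 0 ≤ s n) (hw : ∀ n, 0 ≤ w n) (hB : ∀ n, 0 < B n)
    (hZ : ∀ n, Z (n + 1) = a n * Z n + s n * x (n + 1)) (hE : ∀ n, 0 < E n)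
    (hEa : ∀ n, E (n + 1) = a n * E n) (hEB : E =o[atTop] B) (hx : x =o[atTop] w) :
    Z =o[atTop] B := by
  obtain ⟨c, hc, hdrift⟩ := h
  refine isLittleO_iff.2 fun ε hε => ?_
  obtain ⟨N, hN⟩ := eventually_atTop.1
    (hdrift.and ((tendsto_add_atTop_nat 1).eventually (hx.def (by positivity : 0 < c * (ε / 2)))))
  set K := |Z N| / E N
  have hbound : ∀ n ≥ N, |Z n| ≤ K * E n + ε / 2 * B n := by
    refine le_of_sub_mul_le_sub_mul ha ?_ ?_
    · rw [div_mul_cancel₀ _ (hE N).ne']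
      nlinarith [hB N]
    · intro n hn
      obtain ⟨hdr, hxn⟩ := hN n hn
      rw [Real.norm_eq_abs, Real.norm_of_nonneg (hw _)] at hxn
      have hsx : s n * |x (n + 1)| ≤ ε / 2 * (c * (s n * w (n + 1))) := by
        nlinarith [mul_le_mul_of_nonneg_left hxn (hs n)]
      rw [hEa]
      nlinarith [abs_succ_sub_mul_abs_le ha hs hZ n, mul_le_mul_of_nonneg_left hdr (half_pos hε).le]
  filter_upwards [eventually_ge_atTop N, (hEB.const_mul_left K).def (half_pos hε)]
    with n hn hEn
  rw [Real.norm_eq_abs, Real.norm_of_nonneg (hB n).le] at hEn ⊢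
  linarith [hbound n hn, le_abs_self (K * E n)]

end IsSupersolution

theorem exp_neg_le_one_sub_half {y : ℝ} (h0 : 0 ≤ y) (h1 : y ≤ 1 / 2) :
    Real.exp (-y) ≤ 1 - y / 2 := by
  have hy : |-y| ≤ 1 := by rw [abs_neg, abs_of_nonneg h0]; linarith
  have := (abs_le.1 (Real.abs_exp_sub_one_sub_id_le hy)).2
  nlinarith

theorem eventually_mul_succ_le_half {β : ℕ → ℝ} (hβ : Tendsto β atTop (nhds 0)) (k : ℝ) :
    ∀ᶠ n in atTop, k * β (n + 1) ≤ 1 / 2 := by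
  have := ((hβ.comp (tendsto_add_atTop_nat 1)).const_mul k).eventually_lt_const
    (by norm_num : k * 0 < 1 / 2)
  exact this.mono fun n hn => hn.le

section Supersolutions

variable {β u w : ℕ → ℝ} {T : ℝ}

theorem isSupersolution_self_of_le_exp_mul {θ : ℝ} (hθ : θ < T) (hβ0 : ∀ n, 0 ≤ β n)
    (hβ : Tendsto β atTop (nhds 0)) (hw0 : ∀ n, 0 ≤ w n)
    (hw : ∀ᶠ n in atTop, w n ≤ Real.exp (θ * β (n + 1)) * w (n + 1)) :
    IsSupersolution (fun n => Real.exp (-β (n + 1) * T)) (fun n => β (n + 1)) w w := by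
  refine ⟨(T - θ) / 2, by linarith, ?_⟩
  filter_upwards [hw, eventually_mul_succ_le_half hβ (T - θ)] with n hwn hsmall
  have hy := exp_neg_le_one_sub_half (mul_nonneg (sub_nonneg.2 hθ.le) (hβ0 (n + 1))) hsmall
  have hexp : Real.exp (-β (n + 1) * T) * Real.exp (θ * β (n + 1)) =
      Real.exp (-((T - θ) * β (n + 1))) := by
    rw [← Real.exp_add]; ring_nf
  calc Real.exp (-β (n + 1) * T) * w n + (T - θ) / 2 * (β (n + 1) * w (n + 1))
      ≤ Real.exp (-((T - θ) * β (n + 1))) * w (n + 1)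
        + (T - θ) / 2 * (β (n + 1) * w (n + 1)) := by
        rw [← hexp, mul_assoc]; gcongr
    _ ≤ w (n + 1) := by nlinarith [hw0 (n + 1)]

theorem isSupersolution_exp_neg_mul {T' : ℝ} (hT' : T' < T) (hβ0 : ∀ n, 0 ≤ β n)
    (hβ : Tendsto β atTop (nhds 0)) (hu : ∀ n, u (n + 1) = u n + β (n + 1))
    (hw : w =O[atTop] fun n => Real.exp (-u n * T')) :
    IsSupersolution (fun n => Real.exp (-β (n + 1) * T)) (fun n => β (n + 1)) w
      fun n => Real.exp (-u n * T') := by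
  obtain ⟨K, hK, hwK⟩ := hw.exists_pos
  refine ⟨(T - T') / (2 * K), by have := sub_pos.2 hT'; positivity, ?_⟩
  filter_upwards [(tendsto_add_atTop_nat 1).eventually hwK.bound,
    eventually_mul_succ_le_half hβ (T - T')] with n hwn hsmall
  rw [Real.norm_eq_abs, Real.norm_of_nonneg (Real.exp_pos _).le] at hwn
  have hy := exp_neg_le_one_sub_half (mul_nonneg (sub_nonneg.2 hT'.le) (hβ0 (n + 1))) hsmall
  have hexp : Real.exp (-β (n + 1) * T) * Real.exp (-u n * T') =
      Real.exp (-((T - T') * β (n + 1))) * Real.exp (-u (n + 1) * T') := by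
    rw [← Real.exp_add, ← Real.exp_add, hu]; ring_nf
  have hsw : (T - T') / (2 * K) * (β (n + 1) * w (n + 1))
      ≤ (T - T') * β (n + 1) / 2 * Real.exp (-u (n + 1) * T') := by
    have := mul_le_mul_of_nonneg_left ((le_abs_self _).trans hwn)
      (div_nonneg (mul_nonneg (sub_nonneg.2 hT'.le) (hβ0 (n + 1))) (mul_pos two_pos hK).le)
    field_simp at this ⊢
    linarith
  rw [hexp]
  nlinarith [Real.exp_pos (-u (n + 1) * T')]

end Supersolutions

theorem isLittleO_exp_neg_mul_of_lt {α : Type*} {l : Filter α} {u : α → ℝ} {T T' : ℝ}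
    (hu : Tendsto u l atTop) (hT' : T' < T) :
    (fun n => Real.exp (-u n * T)) =o[l] fun n => Real.exp (-u n * T') := by
  refine (isLittleO_iff_tendsto fun n h => absurd h (Real.exp_pos _).ne').2 ?_
  have : Tendsto (fun n => Real.exp (-((T - T') * u n))) l (nhds 0) :=
    Real.tendsto_exp_atBot.comp
      (tendsto_neg_atTop_atBot.comp (hu.const_mul_atTop (sub_pos.2 hT')))
  refine this.congr fun n => ?_
  rw [← Real.exp_sub]; ring_nf

theorem isBigO_exp_neg_mul_of_le_exp_mul {β u w : ℕ → ℝ} {θ : ℝ}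
    (hu : ∀ n, u (n + 1) = u n + β (n + 1)) (hw0 : ∀ n, 0 < w n)
    (hw : ∀ᶠ n in atTop, w n ≤ Real.exp (θ * β (n + 1)) * w (n + 1)) :
    (fun n => Real.exp (-u n * θ)) =O[atTop] w := by
  obtain ⟨N, hN⟩ := eventually_atTop.1 hw
  have hmono : ∀ n ≥ N, w N * Real.exp (θ * u N) ≤ w n * Real.exp (θ * u n) := by
    intro n hn
    induction n, hn using Nat.le_induction with
    | base => rfl
    | succ n hn ih =>
      calc w N * Real.exp (θ * u N) ≤ w n * Real.exp (θ * u n) := ih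
        _ ≤ Real.exp (θ * β (n + 1)) * w (n + 1) * Real.exp (θ * u n) := by gcongr; exact hN n hn
        _ = w (n + 1) * Real.exp (θ * u (n + 1)) := by rw [hu, mul_add, Real.exp_add]; ring
  have hm : 0 < w N * Real.exp (θ * u N) := mul_pos (hw0 N) (Real.exp_pos _)
  refine IsBigO.of_bound (w N * Real.exp (θ * u N))⁻¹ ?_
  filter_upwards [eventually_ge_atTop N] with n hn
  rw [Real.norm_of_nonneg (Real.exp_pos _).le, Real.norm_of_nonneg (hw0 n).le,
    show -u n * θ = -(θ * u n) by ring, Real.exp_neg, inv_mul_eq_div, le_div_iff₀ hm,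
    inv_mul_le_iff₀ (Real.exp_pos _), mul_comm (Real.exp _)]
  exact hmono n hn

section PartialSums

variable {β u : ℕ → ℝ}

theorem partialSum_succ (hu : ∀ n, u n = ∑ k ∈ Finset.Icc 1 n, β k) (n : ℕ) :
    u (n + 1) = u n + β (n + 1) := by
  rw [hu, hu, Finset.sum_Icc_succ_top (Nat.le_add_left 1 n)]

theorem exp_neg_mul_succ (hu : ∀ n, u (n + 1) = u n + β (n + 1)) (T : ℝ) (n : ℕ) :
    Real.exp (-u (n + 1) * T) = Real.exp (-β (n + 1) * T) * Real.exp (-u n * T) := by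
  rw [hu, ← Real.exp_add]; ring_nf

theorem weightedSum_succ {x Z : ℕ → ℝ} {T : ℝ} (hu : ∀ n, u n = ∑ k ∈ Finset.Icc 1 n, β k)
    (hZ : ∀ n, Z n =
      Real.exp (-u n * T) * ∑ k ∈ Finset.Icc 1 n, Real.exp (u k * T) * β k * x k) (n : ℕ) :
    Z (n + 1) = Real.exp (-β (n + 1) * T) * Z n + β (n + 1) * x (n + 1) := by
  have hcancel : Real.exp (-u (n + 1) * T) * Real.exp (u (n + 1) * T) = 1 := by
    rw [← Real.exp_add]; simp
  rw [hZ, hZ, Finset.sum_Icc_succ_top (Nat.le_add_left 1 n)]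
  linear_combination (∑ k ∈ Finset.Icc 1 n, Real.exp (u k * T) * β k * x k) *
      exp_neg_mul_succ (partialSum_succ hu) T n + β (n + 1) * x (n + 1) * hcancel

end PartialSums

section PolynomialStepSizes

variable {β₀ b : ℝ} {β u : ℕ → ℝ}

theorem stepSize_nonneg (hβ : ∀ n : ℕ, β n = β₀ * (n : ℝ) ^ (-b)) (hβ₀ : 0 ≤ β₀) (n : ℕ) :
    0 ≤ β n := by
  rw [hβ]; positivity

theorem tendsto_stepSize (hβ : ∀ n : ℕ, β n = β₀ * (n : ℝ) ^ (-b)) (hb : 0 < b) :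
    Tendsto β atTop (nhds 0) := by
  have := ((tendsto_rpow_neg_atTop hb).comp tendsto_natCast_atTop_atTop).const_mul β₀
  rw [mul_zero] at this
  exact this.congr fun n => (hβ n).symm

theorem stepSize_le_two_mul_succ (hβ : ∀ n : ℕ, β n = β₀ * (n : ℝ) ^ (-b)) (hβ₀ : 0 ≤ β₀)
    (hb0 : 0 ≤ b) (hb1 : b ≤ 1) {n : ℕ} (hn : 1 ≤ n) : β n ≤ 2 * β (n + 1) := by
  have hn' : (1 : ℝ) ≤ n := by exact_mod_cast hn
  have h2 : (2 : ℝ) ^ (-b) * (n : ℝ) ^ (-b) ≤ ((n + 1 : ℕ) : ℝ) ^ (-b) := by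
    rw [← Real.mul_rpow zero_le_two (by positivity)]
    exact Real.rpow_le_rpow_of_nonpos (by positivity) (by push_cast; linarith) (by linarith)
  have h2b : (1 / 2 : ℝ) ≤ 2 ^ (-b) := by
    simpa [Real.rpow_neg_one] using
      Real.rpow_le_rpow_of_exponent_le one_le_two (neg_le_neg hb1)
  rw [hβ, hβ]
  nlinarith [mul_le_mul_of_nonneg_right h2b (by positivity : (0 : ℝ) ≤ β₀ * (n : ℝ) ^ (-b))]

theorem mul_harmonic_le_partialSum (hβ : ∀ n : ℕ, β n = β₀ * (n : ℝ) ^ (-b))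
    (hu : ∀ n, u n = ∑ k ∈ Finset.Icc 1 n, β k) (hβ₀ : 0 ≤ β₀) (hb : b ≤ 1) (n : ℕ) :
    β₀ * harmonic n ≤ u n := by
  rw [hu, harmonic_eq_sum_Icc]
  push_cast
  rw [Finset.mul_sum]
  refine Finset.sum_le_sum fun k hk => ?_
  have hk : (1 : ℝ) ≤ k := by exact_mod_cast (Finset.mem_Icc.1 hk).1
  rw [hβ, ← Real.rpow_neg_one]
  gcongr

theorem tendsto_partialSum (hβ : ∀ n : ℕ, β n = β₀ * (n : ℝ) ^ (-b))
    (hu : ∀ n, u n = ∑ k ∈ Finset.Icc 1 n, β k) (hβ₀ : 0 < β₀) (hb : b ≤ 1) :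
    Tendsto u atTop atTop := by
  refine tendsto_atTop_mono (fun n => (mul_le_mul_of_nonneg_left (log_add_one_le_harmonic n)
    hβ₀.le).trans (mul_harmonic_le_partialSum hβ hu hβ₀.le hb n)) ?_
  refine Tendsto.const_mul_atTop hβ₀ (Real.tendsto_log_atTop.comp ?_)
  exact tendsto_natCast_atTop_atTop.comp (tendsto_add_atTop_nat 1) |>.congr fun n => by simp

theorem partialSum_le_mul_one_add_log (hβ : ∀ n : ℕ, β n = β₀ * (n : ℝ) ^ (-1 : ℝ))
    (hu : ∀ n, u n = ∑ k ∈ Finset.Icc 1 n, β k) (hβ₀ : 0 ≤ β₀) (n : ℕ) :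
    u n ≤ β₀ * (1 + Real.log n) := by
  refine le_trans (le_of_eq ?_) (mul_le_mul_of_nonneg_left (harmonic_le_one_add_log n) hβ₀)
  rw [hu, harmonic_eq_sum_Icc]
  push_cast
  rw [Finset.mul_sum]
  exact Finset.sum_congr rfl fun k _ => by rw [hβ, Real.rpow_neg_one]

end PolynomialStepSizes

section Weights

variable {β w : ℕ → ℝ}

theorem eventually_le_exp_mul_succ_of_isLittleO {θ : ℝ} (hθ : 0 < θ) (hβ0 : ∀ n, 0 ≤ β n)
    (hβ2 : ∀ᶠ n in atTop, β n ≤ 2 * β (n + 1)) (hw0 : ∀ n, 0 < w n)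
    (hw : (fun n => w n / w (n + 1) - 1) =o[atTop] β) :
    ∀ᶠ n in atTop, w n ≤ Real.exp (θ * β (n + 1)) * w (n + 1) := by
  filter_upwards [hw.def (half_pos hθ), hβ2] with n hn hn2
  rw [Real.norm_eq_abs, Real.norm_of_nonneg (hβ0 n)] at hn
  have hratio : w n / w (n + 1) ≤ Real.exp (θ * β (n + 1)) := by
    nlinarith [(abs_le.1 hn).2, Real.add_one_le_exp (θ * β (n + 1))]
  rwa [div_le_iff₀ (hw0 (n + 1))] at hratio

theorem le_exp_div_mul_succ {L : ℝ → ℝ} {ω : ℝ} (hω : 0 ≤ ω) (hL : Monotone L)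
    (hw0 : ∀ n, 0 < w n) (hwL : ∀ n : ℕ, 1 ≤ n → w n = (n : ℝ) ^ (-ω) * L n)
    {n : ℕ} (hn : 1 ≤ n) : w n ≤ Real.exp (ω / n) * w (n + 1) := by
  have hn' : (0 : ℝ) < n := by exact_mod_cast hn
  have hwn1 := hwL (n + 1) (Nat.le_add_left 1 n)
  push_cast at hwn1
  have hratio : (((n : ℝ) + 1) / n) ^ ω ≤ Real.exp (ω / n) := by
    have hbase : ((n : ℝ) + 1) / n ≤ Real.exp (1 / n) := by
      rw [add_div, div_self hn'.ne', add_comm]; exact Real.add_one_le_exp _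
    calc _ ≤ Real.exp (1 / n) ^ ω := Real.rpow_le_rpow (by positivity) hbase hω
      _ = _ := by rw [← Real.exp_mul]; ring_nf
  have hsplit : (n : ℝ) ^ (-ω) = (((n : ℝ) + 1) / n) ^ ω * ((n : ℝ) + 1) ^ (-ω) := by
    rw [Real.div_rpow (by positivity) hn'.le, Real.rpow_neg hn'.le, Real.rpow_neg (by positivity)]
    field_simp
  calc w n = (n : ℝ) ^ (-ω) * L n := hwL n hn
    _ ≤ (n : ℝ) ^ (-ω) * L (n + 1) := by gcongr; exact hL (by linarith)
    _ = (((n : ℝ) + 1) / n) ^ ω * w (n + 1) := by rw [hsplit, hwn1]; ring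
    _ ≤ Real.exp (ω / n) * w (n + 1) := mul_le_mul_of_nonneg_right hratio (hw0 _).le

theorem eventually_le_exp_mul_succ_of_eq_rpow_mul {L : ℝ → ℝ} {ω θ β₀ : ℝ} (hω : 0 ≤ ω)
    (hL : Monotone L) (hw0 : ∀ n, 0 < w n) (hwL : ∀ n : ℕ, 1 ≤ n → w n = (n : ℝ) ^ (-ω) * L n)
    (hβ : ∀ n : ℕ, β n = β₀ * (n : ℝ) ^ (-1 : ℝ)) (hθ : ω < θ * β₀) :
    ∀ᶠ n in atTop, w n ≤ Real.exp (θ * β (n + 1)) * w (n + 1) := by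
  filter_upwards [eventually_ge_atTop 1,
    tendsto_natCast_atTop_atTop.eventually_ge_atTop (ω / (θ * β₀ - ω))] with n hn hnω
  have hn' : (0 : ℝ) < n := by exact_mod_cast hn
  have hexp : ω / n ≤ θ * β (n + 1) := by
    rw [div_le_iff₀ (sub_pos.2 hθ)] at hnω
    rw [hβ, Real.rpow_neg_one, div_le_iff₀ hn']
    push_cast
    field_simp
    nlinarith
  exact (le_exp_div_mul_succ hω hL hw0 hwL hn).trans
    (mul_le_mul_of_nonneg_right (Real.exp_le_exp.2 hexp) (hw0 _).le)

end Weights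

theorem SlowlyVarying.isBigO_rpow {L : ℝ → ℝ} (hsv : SlowlyVarying L) (hL : Monotone L)
    (hpos : ∀ᶠ x in atTop, 0 < L x) {δ : ℝ} (hδ : 0 < δ) :
    L =O[atTop] fun x => x ^ δ := by
  have h2δ : (1 : ℝ) < 2 ^ δ := Real.one_lt_rpow one_lt_two hδ
  obtain ⟨X, hX⟩ := eventually_atTop.1 (((hsv 2 two_pos).eventually_lt_const h2δ).and
    (hpos.and (eventually_gt_atTop 0)))
  have hX0 : 0 < X := (hX X le_rfl).2.2
  have hdouble : ∀ x ≥ X, L (2 * x) ≤ 2 ^ δ * L x := fun x hx => by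
    obtain ⟨hratio, hLx, -⟩ := hX x hx
    rw [div_lt_iff₀ hLx] at hratio
    exact hratio.le
  set K := L (2 * X) / X ^ δ
  have hsmall : ∀ x, X ≤ x → x ≤ 2 * X → L x ≤ K * x ^ δ := fun x h1 h2 =>
    calc L x ≤ L (2 * X) := hL h2
      _ = K * X ^ δ := (div_mul_cancel₀ _ (Real.rpow_pos_of_pos hX0 δ).ne').symm
      _ ≤ K * x ^ δ := by
        have : 0 ≤ K := div_nonneg (hX (2 * X) (by linarith)).2.1.le (by positivity)
        gcongr
  have hdyadic : ∀ n : ℕ, ∀ x, X ≤ x → x ≤ 2 ^ n * X → L x ≤ K * x ^ δ := by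
    intro n
    induction n with
    | zero => exact fun x h1 h2 => hsmall x h1 (by linarith)
    | succ n ih =>
      intro x h1 h2
      by_cases hx : x ≤ 2 * X
      · exact hsmall x h1 hx
      have hhalf : X ≤ x / 2 := by linarith
      calc L x = L (2 * (x / 2)) := by ring_nf
        _ ≤ 2 ^ δ * L (x / 2) := hdouble _ hhalf
        _ ≤ 2 ^ δ * (K * (x / 2) ^ δ) := by
          gcongr
          exact ih _ hhalf (by rw [pow_succ] at h2; linarith)
        _ = K * x ^ δ := by
          rw [Real.div_rpow (by linarith) zero_le_two]
          field_simp
  refine IsBigO.of_bound K ?_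
  filter_upwards [eventually_ge_atTop X] with x hx
  obtain ⟨n, hn⟩ := pow_unbounded_of_one_lt (x / X) one_lt_two
  rw [Real.norm_of_nonneg (hX x hx).2.1.le, Real.norm_of_nonneg (Real.rpow_nonneg (by linarith) _)]
  exact hdyadic n x hx ((div_le_iff₀ hX0).1 hn.le)

theorem isBigO_exp_neg_mul_of_eq_rpow_mul {β u w : ℕ → ℝ} {L : ℝ → ℝ} {ω β₀ T' : ℝ}
    (hsv : SlowlyVarying L) (hL : Monotone L) (hw0 : ∀ n, 0 < w n)
    (hwL : ∀ n : ℕ, 1 ≤ n → w n = (n : ℝ) ^ (-ω) * L n)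
    (hβ : ∀ n : ℕ, β n = β₀ * (n : ℝ) ^ (-1 : ℝ)) (hu : ∀ n, u n = ∑ k ∈ Finset.Icc 1 n, β k)
    (hβ₀ : 0 ≤ β₀) (hT' : 0 ≤ T') (hω : β₀ * T' < ω) :
    w =O[atTop] fun n => Real.exp (-u n * T') := by
  have hL1 : 0 < L 1 := by simpa [hwL 1 le_rfl] using hw0 1
  have hLpos : ∀ᶠ x in atTop, 0 < L x := by
    filter_upwards [eventually_ge_atTop 1] with x hx using hL1.trans_le (hL hx)
  have hLδ : (fun n : ℕ => L n) =O[atTop] fun n : ℕ => (n : ℝ) ^ (ω - β₀ * T') :=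
    (hsv.isBigO_rpow hL hLpos (sub_pos.2 hω)).comp_tendsto tendsto_natCast_atTop_atTop
  have hpoly : w =O[atTop] fun n : ℕ => (n : ℝ) ^ (-(β₀ * T')) := by
    refine ((isBigO_refl (fun n : ℕ => (n : ℝ) ^ (-ω)) atTop).mul hLδ).congr' ?_ ?_
    · filter_upwards [eventually_ge_atTop 1] with n hn using (hwL n hn).symm
    · filter_upwards [eventually_ge_atTop 1] with n hn
      have hn' : (0 : ℝ) < n := by exact_mod_cast hn
      rw [← Real.rpow_add hn']; ring_nf
  refine hpoly.trans (IsBigO.of_bound (Real.exp (β₀ * T')) ?_)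
  filter_upwards [eventually_ge_atTop 1] with n hn
  have hn' : (0 : ℝ) < n := by exact_mod_cast hn
  have hlog := partialSum_le_mul_one_add_log hβ hu hβ₀ n
  rw [Real.norm_of_nonneg (by positivity), Real.norm_of_nonneg (Real.exp_pos _).le,
    Real.rpow_def_of_pos hn', ← Real.exp_add]
  exact Real.exp_le_exp.2 (by nlinarith)

theorem exists_isSupersolution {b β₀ T T' : ℝ} {β u w : ℕ → ℝ} (hb0 : 0 < b) (hb1 : b ≤ 1)
    (hβ₀ : 0 < β₀) (hT' : 0 < T') (hT'T : T' < T) (hβ : ∀ n : ℕ, β n = β₀ * (n : ℝ) ^ (-b))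
    (hu : ∀ n, u n = ∑ k ∈ Finset.Icc 1 n, β k) (hw : ConditionC b β w) :
    ∃ B : ℕ → ℝ,
      IsSupersolution (fun n => Real.exp (-β (n + 1) * T)) (fun n => β (n + 1)) w B ∧
      (∀ n, 0 < B n) ∧ (fun n => Real.exp (-u n * T)) =o[atTop] B ∧
      B =O[atTop] fun n => Real.exp (-u n * T') * ind1 b + w n := by
  obtain ⟨hw0, -, hwC⟩ := hw
  have hβ0 := stepSize_nonneg hβ hβ₀.le
  have hβlim := tendsto_stepSize hβ hb0
  have hu_succ := partialSum_succ hu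
  have hE := isLittleO_exp_neg_mul_of_lt (tendsto_partialSum hβ hu hβ₀ hb1) hT'T
  have hE'B : (fun n => Real.exp (-u n * T')) =O[atTop] fun n => Real.exp (-u n * T') + w n := by
    refine IsBigO.of_bound' (Eventually.of_forall fun n => ?_)
    rw [Real.norm_of_nonneg (Real.exp_pos _).le,
      Real.norm_of_nonneg (add_pos (Real.exp_pos _) (hw0 n)).le]
    linarith [hw0 n]
  by_cases hb : b = 1
  · rw [if_pos hb] at hwC
    obtain ⟨ω, hω, L, hL, hsv, hwL⟩ := hwC
    simp only [ind1, if_pos hb, mul_one]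
    subst hb
    rcases lt_or_ge ω (β₀ * T) with hωT | hωT
    · have hθT : (ω / β₀ + T) / 2 < T := by
        linarith [(div_lt_iff₀ hβ₀).2 (by linarith : ω < T * β₀)]
      have hθ : ω < (ω / β₀ + T) / 2 * β₀ := by field_simp; linarith
      have hsup := isSupersolution_self_of_le_exp_mul hθT hβ0 hβlim (fun n => (hw0 n).le)
        (eventually_le_exp_mul_succ_of_eq_rpow_mul hω hL hw0 hwL hβ hθ)
      refine ⟨fun n => Real.exp (-u n * T') + w n, hsup.add_of_eventually_mul_le
        (Eventually.of_forall fun n => ?_), fun n => add_pos (Real.exp_pos _) (hw0 n),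
        hE.trans_isBigO hE'B, isBigO_refl _ _⟩
      rw [exp_neg_mul_succ hu_succ]
      exact mul_le_mul_of_nonneg_right (Real.exp_le_exp.2 (by nlinarith [hβ0 (n + 1)]))
        (Real.exp_pos _).le
    · have hwE := isBigO_exp_neg_mul_of_eq_rpow_mul hsv hL hw0 hwL hβ hu hβ₀.le hT'.le
        (by nlinarith)
      exact ⟨fun n => Real.exp (-u n * T'), isSupersolution_exp_neg_mul hT'T hβ0 hβlim hu_succ hwE,
        fun n => Real.exp_pos _, hE, hE'B⟩
  · rw [if_neg hb] at hwC
    have hβ2 : ∀ᶠ n in atTop, β n ≤ 2 * β (n + 1) := by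
      filter_upwards [eventually_ge_atTop 1] with n hn
      exact stepSize_le_two_mul_succ hβ hβ₀.le hb0.le hb1 hn
    have hwT' := eventually_le_exp_mul_succ_of_isLittleO hT' hβ0 hβ2 hw0 hwC
    refine ⟨w, isSupersolution_self_of_le_exp_mul hT'T hβ0 hβlim (fun n => (hw0 n).le) hwT',
      hw0, hE.trans_isBigO (isBigO_exp_neg_mul_of_le_exp_mul hu_succ hw0 hwT'), ?_⟩
    simp only [ind1, if_neg hb, mul_zero, zero_add]
    exact isBigO_refl _ _

theorem weighted_sum_fast_scalar_general
    {b β₀ T : ℝ} (hb1 : 1/2 < b) (hb2 : b ≤ 1) (hβ₀ : 0 < β₀)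
    (β u : ℕ → ℝ)
    (hβ : ∀ n : ℕ, β n = β₀ * (n : ℝ) ^ (-b))
    (hu : ∀ n, u n = ∑ k ∈ Finset.Icc 1 n, β k)
    (x : ℕ → ℝ)
    (Z : ℕ → ℝ)
    (hZ : ∀ n, Z n = Real.exp (-(u n) * T) * ∑ k ∈ Finset.Icc 1 n, Real.exp (u k * T) * β k * x k)
    (w : ℕ → ℝ) (hw : ConditionC b β w) :
    ((x =O[atTop] w) → ∀ T' : ℝ, 0 < T' → T' < T →
      Z =O[atTop] fun n : ℕ => Real.exp (-(u n) * T') * ind1 b + w n) ∧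
    ((x =o[atTop] w) → ∀ T' : ℝ, 0 < T' → T' < T →
      Z =o[atTop] fun n : ℕ => Real.exp (-(u n) * T') * ind1 b + w n) := by
  have ha : ∀ n, 0 ≤ Real.exp (-β (n + 1) * T) := fun n => (Real.exp_pos _).le
  have hs : ∀ n, 0 ≤ β (n + 1) := fun n => stepSize_nonneg hβ hβ₀.le (n + 1)
  have hw0 : ∀ n, 0 ≤ w n := fun n => (hw.1 n).le
  have hZ_succ := weightedSum_succ hu hZ
  refine ⟨fun hx T' hT' hT'T => ?_, fun hx T' hT' hT'T => ?_⟩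
  · obtain ⟨B, hB, hB0, -, hBO⟩ :=
      exists_isSupersolution (by linarith) hb2 hβ₀ hT' hT'T hβ hu hw
    exact (hB.isBigO ha hs hw0 hB0 hZ_succ hx).trans hBO
  · obtain ⟨B, hB, hB0, hEB, hBO⟩ :=
      exists_isSupersolution (by linarith) hb2 hβ₀ hT' hT'T hβ hu hw
    exact (hB.isLittleO ha hs hw0 hB0 hZ_succ (fun n => Real.exp_pos _)
      (exp_neg_mul_succ (partialSum_succ hu) T) hEB hx).trans_isBigO hBO

/-- **Lemma 9, part 1** (exponentially weighted sums at the fast time scale):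
for `Z_n^{(1)} = e^{-u_n T} Σ_{k≤n} e^{u_k T} β_k x_k` and `(w_n)` satisfying Condition (C),
if `x_n = O(w_n)` then `|Z_n^{(1)}| = O(e^{-u_n T'} 𝟙_{b=1} + w_n)` for every `T' ∈ (0,T)`,
and similarly with `o` in place of `O`. -/
theorem weighted_sum_fast_scalar
    {b β₀ T : ℝ} (hb1 : 1/2 < b) (hb2 : b ≤ 1) (hβ₀ : 0 < β₀) (hT : 0 < T)
    (β u : ℕ → ℝ)
    (hβ : ∀ n : ℕ, β n = β₀ * (n : ℝ) ^ (-b))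
    (hu : ∀ n, u n = ∑ k ∈ Finset.Icc 1 n, β k)
    (x : ℕ → ℝ) (hx : ∀ n, 0 < x n)
    (Z : ℕ → ℝ)
    (hZ : ∀ n, Z n = Real.exp (-(u n) * T) * ∑ k ∈ Finset.Icc 1 n, Real.exp (u k * T) * β k * x k)
    (w : ℕ → ℝ) (hw : ConditionC b β w) :
    ((x =O[atTop] w) → ∀ T' : ℝ, 0 < T' → T' < T →
      Z =O[atTop] fun n : ℕ => Real.exp (-(u n) * T') * ind1 b + w n) ∧
    ((x =o[atTop] w) → ∀ T' : ℝ, 0 < T' → T' < T →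
      Z =o[atTop] fun n : ℕ => Real.exp (-(u n) * T') * ind1 b + w n) :=
  weighted_sum_fast_scalar_general hb1 hb2 hβ₀ β u hβ hu x Z hZ w hw
end
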